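/- Let (E, J, M) be a double factorization system on a category C, and let G = (G, ε, δ) be a comonad on C whose underlying functor preserves all small limits, trivial fibrations (G(M) ⊆ M) and bifibrant morphisms (G(J) ⊆ J); let (E_G, J_G, M_G) be the left-induced dfs on the category of G-coalgebras C_G given by preimages under the forgetful functor U : C_G → C, and let R denote the cofree coalgebra functor. Then U maps (J_G·E_G)-local coalgebras to (J·E)-local objects and R maps (J·E)-local objects to (J_G·E_G)-local coalgebras if and only if G preserves (J·E)-local objects, i.e. G(C_{J·E}) ⊆ C_{J·E}. -/

import Mathlib

open CategoryTheory CategoryTheory.Limits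

universe v u v₂ u₂

namespace DFS

variable {C : Type u} [Category.{v} C]

/-- `f` is (left) orthogonal to `g`: every commutative square from `f` to `g`
admits a unique diagonal filler. -/
def Orth {A B X Y : C} (f : A ⟶ B) (g : X ⟶ Y) : Prop :=
  ∀ (u : A ⟶ X) (v : B ⟶ Y), u ≫ g = f ≫ v → ∃! h : B ⟶ X, f ≫ h = u ∧ h ≫ g = v

/-- Mutual orthogonality of two classes of morphisms. -/
def ClassOrth (L R : MorphismProperty C) : Prop :=
  ∀ ⦃A B X Y : C⦄ (f : A ⟶ B) (g : X ⟶ Y), L f → R g → Orth f g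

/-- The class `R·L` of composites `e ≫ m` with `e ∈ L` and `m ∈ R`. -/
def Comp (R L : MorphismProperty C) : MorphismProperty C :=
  fun X Y f => ∃ (Z : C) (e : X ⟶ Z) (m : Z ⟶ Y), L e ∧ R m ∧ e ≫ m = f

/-- An object `X` is `L`-local if precomposition with every member of `L` is a
bijection of hom-sets into `X`. -/
def IsLocal (L : MorphismProperty C) (X : C) : Prop :=
  ∀ ⦃A B : C⦄ (m : A ⟶ B), L m → Function.Bijective (fun g : B ⟶ X => m ≫ g)

/-- An object `X` is `L`-separating if precomposition with every member of `L` is an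
injection of hom-sets into `X`. -/
def IsSeparating (L : MorphismProperty C) (X : C) : Prop :=
  ∀ ⦃A B : C⦄ (m : A ⟶ B), L m → Function.Injective (fun g : B ⟶ X => m ≫ g)

/-- A double (orthogonal) factorization system. -/
structure IsDFS (E J M : MorphismProperty C) : Prop where
  postcomp_iso_E : ∀ ⦃A B B' : C⦄ (e : A ⟶ B) (i : B ⟶ B'), IsIso i → E e → E (e ≫ i)
  comp_iso_J : ∀ ⦃A' A B B' : C⦄ (i : A' ⟶ A) (j : A ⟶ B) (i' : B ⟶ B'),
      IsIso i → IsIso i' → J j → J (i ≫ j ≫ i')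
  precomp_iso_M : ∀ ⦃A' A B : C⦄ (i : A' ⟶ A) (m : A ⟶ B), IsIso i → M m → M (i ≫ m)
  fac : ∀ ⦃X Y : C⦄ (f : X ⟶ Y), ∃ (A B : C) (e : X ⟶ A) (j : A ⟶ B) (m : B ⟶ Y),
      E e ∧ J j ∧ M m ∧ e ≫ j ≫ m = f
  lift : ∀ ⦃A B B'' D D' F' : C⦄ (e : A ⟶ B) (j : B ⟶ B'') (j' : D ⟶ D') (m : D' ⟶ F')
      (u : A ⟶ D) (v : B'' ⟶ F'), E e → J j → J j' → M m →
      e ≫ j ≫ v = u ≫ j' ≫ m →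
      ∃! st : (B ⟶ D) × (B'' ⟶ D'),
        e ≫ st.1 = u ∧ st.1 ≫ j' = j ≫ st.2 ∧ st.2 ≫ m = v

/-- An (orthogonal) factorization system. -/
structure IsFS (L R : MorphismProperty C) : Prop where
  fac : ∀ ⦃X Y : C⦄ (f : X ⟶ Y), ∃ (Z : C) (e : X ⟶ Z) (m : Z ⟶ Y), L e ∧ R m ∧ e ≫ m = f
  left_iff : ∀ ⦃A B : C⦄ (f : A ⟶ B), L f ↔ ∀ ⦃X Y : C⦄ (g : X ⟶ Y), R g → Orth f g
  right_iff : ∀ ⦃X Y : C⦄ (g : X ⟶ Y), R g ↔ ∀ ⦃A B : C⦄ (f : A ⟶ B), L f → Orth f g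

/-- Stability of a class of morphisms under pullback. -/
def StableUnderPB (P : MorphismProperty C) : Prop :=
  ∀ ⦃A B A' B' : C⦄ (f : A ⟶ B) (g : B' ⟶ B) (f' : A' ⟶ B') (h : A' ⟶ A),
    IsPullback h f' f g → P f → P f'

/-- A left Quillen functor between categories equipped with dfs's: it maps
trivial cofibrations to trivial cofibrations and cofibrations to cofibrations. -/
def LeftQuillen {D : Type u₂} [Category.{v₂} D]
    (EC JC : MorphismProperty C) (ED JD : MorphismProperty D) (F : C ⥤ D) : Prop :=
  (∀ ⦃A B : C⦄ (f : A ⟶ B), EC f → ED (F.map f)) ∧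
  (∀ ⦃A B : C⦄ (f : A ⟶ B), Comp JC EC f → Comp JD ED (F.map f))

end DFS

namespace DFS

/-- The preimage of a class of morphisms under the forgetful functor from
Eilenberg–Moore coalgebras. -/
def coalgPre {C : Type u} [Category.{v} C] (G : Comonad C) (P : MorphismProperty C) :
    MorphismProperty G.Coalgebra :=
  fun _ _ f => P f.f

end DFS

/-!
Every coalgebra `X` has a coalgebra map to the cofree coalgebra `R 1`, whose underlying
object is `G 1`. Its factorization `e ≫ j ≫ m` in `C` lifts to coalgebras: the unique
fillers of the dfs, applied to the structure maps of `X` and `R 1`, equip the middle objects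
with coalgebra structures, and uniqueness gives the counit and coassociativity laws. If `X`
is `(J_G·E_G)`-local, `e ≫ j` has a retraction, and an object retracting off the source of a
`J`-map followed by an `M`-map into a `(J·E)`-local object such as `G 1` is `(J·E)`-local.
Conversely `U (R A) = G A`, and `R` preserves local objects because it is right adjoint to `U`.
-/

namespace DFS

variable {C : Type u} [Category.{v} C]

lemma isLocal_terminal [HasTerminal C] (L : MorphismProperty C) : IsLocal L (⊤_ C) :=
  fun _ B _ _ =>
    ⟨fun _ _ _ => terminal.hom_ext _ _, fun _ => ⟨terminal.from B, terminal.hom_ext _ _⟩⟩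

lemma isLocal_right_adjoint_obj {D : Type u₂} [Category.{v₂} D] {F : D ⥤ C} {R : C ⥤ D}
    (adj : F ⊣ R) {P : MorphismProperty D} {Q : MorphismProperty C}
    (hPQ : ∀ ⦃X Y : D⦄ (f : X ⟶ Y), P f → Q (F.map f)) {A : C} (hA : IsLocal Q A) :
    IsLocal P (R.obj A) := by
  intro X Y f hf
  have hcomp : (fun g : Y ⟶ R.obj A => f ≫ g)
      = adj.homEquiv X A ∘ (fun g => F.map f ≫ g) ∘ (adj.homEquiv Y A).symm := by
    funext g
    simp [Adjunction.homEquiv_naturality_left]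
  rw [hcomp]
  exact ((adj.homEquiv X A).bijective.comp (hA _ (hPQ f hf))).comp
    (adj.homEquiv Y A).symm.bijective

lemma comp_coalgPre_forget {G : Comonad C} {R L : MorphismProperty C} {X Y : G.Coalgebra}
    {f : X ⟶ Y} : Comp (coalgPre G R) (coalgPre G L) f → Comp R L f.f
  | ⟨Z, e, m, he, hm, hf⟩ => ⟨Z.A, e.f, m.f, he, hm, by rw [← hf]; rfl⟩

namespace IsDFS

variable {E J M : MorphismProperty C}

lemma lift_ext (h : IsDFS E J M) {A B B'' D D' F' : C} {e : A ⟶ B} {j : B ⟶ B''}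
    {j' : D ⟶ D'} {m : D' ⟶ F'} (he : E e) (hj : J j) (hj' : J j') (hm : M m)
    {s s' : B ⟶ D} {t t' : B'' ⟶ D'} (hs : e ≫ s = e ≫ s') (hst : s ≫ j' = j ≫ t)
    (hst' : s' ≫ j' = j ≫ t') (ht : t ≫ m = t' ≫ m) : s = s' ∧ t = t' := by
  obtain ⟨_, _, huniq⟩ := h.lift e j j' m (e ≫ s) (t ≫ m) he hj hj' hm
    (by rw [← reassoc_of% hst]; simp)
  have h₁ := huniq (s, t) ⟨rfl, hst, rfl⟩
  have h₂ := huniq (s', t') ⟨hs.symm, hst', ht.symm⟩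
  exact Prod.ext_iff.mp (h₁.trans h₂.symm)

lemma isLocal_of_retraction (h : IsDFS E J M) {Y D D' Z : C} (i : Y ⟶ D) {j' : D ⟶ D'}
    {m : D' ⟶ Z} (r : D' ⟶ Y) (hj' : J j') (hm : M m) (hr : i ≫ j' ≫ r = 𝟙 Y)
    (hZ : IsLocal (Comp J E) Z) : IsLocal (Comp J E) Y := by
  rintro A B _ ⟨W, e, j, he, hj, rfl⟩
  have hZej := hZ (e ≫ j) ⟨W, e, j, he, hj, rfl⟩
  refine ⟨fun h₁ h₂ hh => ?_, fun u => ?_⟩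
  · replace hh : e ≫ j ≫ h₁ = e ≫ j ≫ h₂ := by simpa using hh
    have hZh : h₁ ≫ i ≫ j' ≫ m = h₂ ≫ i ≫ j' ≫ m :=
      hZej.1 (by simp only [Category.assoc, reassoc_of% hh])
    obtain ⟨-, hh'⟩ := h.lift_ext (s := j ≫ h₁ ≫ i) (s' := j ≫ h₂ ≫ i)
      (t := h₁ ≫ i ≫ j') (t' := h₂ ≫ i ≫ j') he hj hj' hm
      (by simp only [reassoc_of% hh]) (by simp) (by simp) (by simpa using hZh)
    calc h₁ = (h₁ ≫ i ≫ j') ≫ r := by simp [hr]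
      _ = (h₂ ≫ i ≫ j') ≫ r := by rw [hh']
      _ = h₂ := by simp [hr]
  · obtain ⟨v, hv⟩ := hZej.2 (u ≫ i ≫ j' ≫ m)
    obtain ⟨⟨s, t⟩, ⟨hs, hst, -⟩, -⟩ :=
      h.lift e j j' m (u ≫ i) v he hj hj' hm (by simpa using hv)
    refine ⟨t ≫ r, ?_⟩
    calc (e ≫ j) ≫ t ≫ r = (e ≫ s) ≫ j' ≫ r := by simp [reassoc_of% hst]
      _ = u := by simp [hs, hr]

variable {G : Comonad C}

lemma exists_coalgebra_lift (h : IsDFS E J M)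
    (hM : ∀ ⦃A B : C⦄ (f : A ⟶ B), M f → M (G.map f))
    (hJ : ∀ ⦃A B : C⦄ (f : A ⟶ B), J f → J (G.map f)) {X Y : G.Coalgebra} (g : X ⟶ Y)
    {A₁ A₂ : C} {e : X.A ⟶ A₁} {j : A₁ ⟶ A₂} {m : A₂ ⟶ Y.A} (he : E e) (hj : J j) (hm : M m)
    (hg : e ≫ j ≫ m = g.f) :
    ∃ (a₁ : A₁ ⟶ G.obj A₁) (a₂ : A₂ ⟶ G.obj A₂),
      X.a ≫ G.map e = e ≫ a₁ ∧ a₁ ≫ G.map j = j ≫ a₂ ∧ a₂ ≫ G.map m = m ≫ Y.a := by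
  have hsq : e ≫ j ≫ m ≫ Y.a = (X.a ≫ G.map e) ≫ G.map j ≫ G.map m := by
    simp [reassoc_of% hg, ← Functor.map_comp, hg]
  obtain ⟨⟨a₁, a₂⟩, ⟨h₁, h₂, h₃⟩, -⟩ :=
    h.lift e j (G.map j) (G.map m) _ _ he hj (hJ j hj) (hM m hm) hsq
  exact ⟨a₁, a₂, h₁.symm, h₂, h₃⟩

lemma coalgebra_counit (h : IsDFS E J M) {X Y : G.Coalgebra} {A₁ A₂ : C} {e : X.A ⟶ A₁}
    {j : A₁ ⟶ A₂} {m : A₂ ⟶ Y.A} (he : E e) (hj : J j) (hm : M m)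
    {a₁ : A₁ ⟶ G.obj A₁} {a₂ : A₂ ⟶ G.obj A₂} (h₁ : X.a ≫ G.map e = e ≫ a₁)
    (h₂ : a₁ ≫ G.map j = j ≫ a₂) (h₃ : a₂ ≫ G.map m = m ≫ Y.a) :
    a₁ ≫ G.ε.app A₁ = 𝟙 A₁ ∧ a₂ ≫ G.ε.app A₂ = 𝟙 A₂ :=
  h.lift_ext he hj hj hm
    (by rw [← reassoc_of% h₁, G.counit_naturality, X.counit_assoc, Category.comp_id])
    (by rw [Category.assoc, ← G.counit_naturality, reassoc_of% h₂])
    (by simp)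
    (by rw [Category.assoc, ← G.counit_naturality, reassoc_of% h₃, Y.counit, Category.comp_id,
      Category.id_comp])

lemma coalgebra_coassoc (h : IsDFS E J M)
    (hM : ∀ ⦃A B : C⦄ (f : A ⟶ B), M f → M (G.map f))
    (hJ : ∀ ⦃A B : C⦄ (f : A ⟶ B), J f → J (G.map f)) {X Y : G.Coalgebra} {A₁ A₂ : C}
    {e : X.A ⟶ A₁} {j : A₁ ⟶ A₂} {m : A₂ ⟶ Y.A} (he : E e) (hj : J j) (hm : M m)
    {a₁ : A₁ ⟶ G.obj A₁} {a₂ : A₂ ⟶ G.obj A₂} (h₁ : X.a ≫ G.map e = e ≫ a₁)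
    (h₂ : a₁ ≫ G.map j = j ≫ a₂) (h₃ : a₂ ≫ G.map m = m ≫ Y.a) :
    a₁ ≫ G.δ.app A₁ = a₁ ≫ G.map a₁ ∧ a₂ ≫ G.δ.app A₂ = a₂ ≫ G.map a₂ :=
  h.lift_ext he hj (hJ _ (hJ j hj)) (hM _ (hM m hm))
    (by rw [← reassoc_of% h₁, ← reassoc_of% h₁, G.delta_naturality, X.coassoc_assoc,
      ← Functor.map_comp, ← Functor.map_comp, h₁])
    (by rw [Category.assoc, ← G.delta_naturality, reassoc_of% h₂])
    (by rw [Category.assoc, ← Functor.map_comp, h₂, Functor.map_comp, reassoc_of% h₂])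
    (by rw [Category.assoc, ← G.delta_naturality, reassoc_of% h₃, Category.assoc,
      ← Functor.map_comp, h₃, Functor.map_comp, reassoc_of% h₃, Y.coassoc])

lemma exists_coalgebra_factorization (h : IsDFS E J M)
    (hM : ∀ ⦃A B : C⦄ (f : A ⟶ B), M f → M (G.map f))
    (hJ : ∀ ⦃A B : C⦄ (f : A ⟶ B), J f → J (G.map f)) {X Y : G.Coalgebra} (g : X ⟶ Y) :
    ∃ (W₁ W₂ : G.Coalgebra) (e : X ⟶ W₁) (j : W₁ ⟶ W₂) (m : W₂ ⟶ Y),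
      coalgPre G E e ∧ coalgPre G J j ∧ coalgPre G M m ∧ e ≫ j ≫ m = g := by
  obtain ⟨A₁, A₂, e, j, m, he, hj, hm, hg⟩ := h.fac g.f
  obtain ⟨a₁, a₂, h₁, h₂, h₃⟩ := h.exists_coalgebra_lift hM hJ g he hj hm hg
  obtain ⟨hc₁, hc₂⟩ := h.coalgebra_counit he hj hm h₁ h₂ h₃
  obtain ⟨hd₁, hd₂⟩ := h.coalgebra_coassoc hM hJ he hj hm h₁ h₂ h₃
  exact ⟨⟨A₁, a₁, hc₁, hd₁⟩, ⟨A₂, a₂, hc₂, hd₂⟩, ⟨e, h₁⟩, ⟨j, h₂⟩, ⟨m, h₃⟩, he, hj, hm,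
    Comonad.Coalgebra.Hom.ext hg⟩

end IsDFS

end DFS

theorem statement10_general {C : Type u} [Category.{v} C] [HasLimits C]
    (E J M : MorphismProperty C) (h : DFS.IsDFS E J M) (G : Comonad C)
    (hM : ∀ ⦃A B : C⦄ (f : A ⟶ B), M f → M (G.toFunctor.map f))
    (hJ : ∀ ⦃A B : C⦄ (f : A ⟶ B), J f → J (G.toFunctor.map f)) :
    ((∀ X : G.Coalgebra,
        DFS.IsLocal (DFS.Comp (DFS.coalgPre G J) (DFS.coalgPre G E)) X →
          DFS.IsLocal (DFS.Comp J E) X.A) ∧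
     (∀ A : C, DFS.IsLocal (DFS.Comp J E) A →
        DFS.IsLocal (DFS.Comp (DFS.coalgPre G J) (DFS.coalgPre G E)) (G.cofree.obj A)))
    ↔ (∀ A : C, DFS.IsLocal (DFS.Comp J E) A →
        DFS.IsLocal (DFS.Comp J E) (G.toFunctor.obj A)) := by
  constructor
  · rintro ⟨hforget, hcofree⟩ A hA
    exact hforget _ (hcofree A hA)
  · intro hG
    refine ⟨fun X hX => ?_, fun A hA =>
      DFS.isLocal_right_adjoint_obj G.adj (fun _ _ _ => DFS.comp_coalgPre_forget) hA⟩
    obtain ⟨W₁, W₂, e, j, m, he, hj, hm, -⟩ :=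
      h.exists_coalgebra_factorization hM hJ (G.adj.homEquiv X (⊤_ C) (terminal.from X.A))
    obtain ⟨r, hr⟩ := (hX (e ≫ j) ⟨W₁, e, j, he, hj, rfl⟩).2 (𝟙 X)
    exact h.isLocal_of_retraction e.f r.f hj hm
      (by simpa using congrArg Comonad.Coalgebra.Hom.f hr) (hG _ (DFS.isLocal_terminal _))

/-- Let `(E, J, M)` be a dfs on a (bicomplete) category `C`, `G` a
comonad whose functor preserves all small limits, trivial fibrations and bifibrant
morphisms, and let `(E_G, J_G, M_G)` be the left-induced dfs on `G`-coalgebras.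
Then [the forgetful functor maps `(J_G·E_G)`-local coalgebras to `(J·E)`-local objects
and the cofree functor maps `(J·E)`-local objects to `(J_G·E_G)`-local coalgebras]
iff `G` preserves `(J·E)`-local objects. -/
theorem statement10 {C : Type u} [Category.{v} C] [HasLimits C] [HasColimits C]
    (E J M : MorphismProperty C) (h : DFS.IsDFS E J M) (G : Comonad C)
    [PreservesLimits G.toFunctor]
    (hM : ∀ ⦃A B : C⦄ (f : A ⟶ B), M f → M (G.toFunctor.map f))
    (hJ : ∀ ⦃A B : C⦄ (f : A ⟶ B), J f → J (G.toFunctor.map f)) :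
    ((∀ X : G.Coalgebra,
        DFS.IsLocal (DFS.Comp (DFS.coalgPre G J) (DFS.coalgPre G E)) X →
          DFS.IsLocal (DFS.Comp J E) X.A) ∧
     (∀ A : C, DFS.IsLocal (DFS.Comp J E) A →
        DFS.IsLocal (DFS.Comp (DFS.coalgPre G J) (DFS.coalgPre G E)) (G.cofree.obj A)))
    ↔ (∀ A : C, DFS.IsLocal (DFS.Comp J E) A →
        DFS.IsLocal (DFS.Comp J E) (G.toFunctor.obj A)) :=
  statement10_general E J M h G hM hJ
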